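/- arXiv:2112.02890 — 2 statements merged into one kernel-verified Lean document; each statement's English description precedes it below -/
import Mathlib

section
/- For a linear functional ℓ(t, x) = ⟨η, x⟩ + λ t on R × R^N with λ > 0, the minimum of ℓ over C = {(t,x) : ||x||_1 ≤ t ≤ M} (M > 0) equals min(0, M(λ - ||η||_∞)), and if ||η||_∞ > λ it is attained at (M, -M sign(η_{i*}) e_{i*}) where i* maximizes |η_i|. -/
/-!
On the cone `‖x‖₁ ≤ t ≤ M` Hölder's inequality gives `⟨η, x⟩ ≥ -‖η‖_∞ ‖x‖₁ ≥ -‖η‖_∞ t`, so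
`ℓ(t, x) ≥ (λ - ‖η‖_∞) t`, an affine function of `t ∈ [0, M]` whose minimum `min 0 (M (λ - ‖η‖_∞))`
is attained at the apex `(0, 0)` or at the vertex `(M, -M sign(η_{i*}) e_{i*})` of the top face.
-/

theorem Real.mul_sign_eq_abs (r : ℝ) : r * Real.sign r = |r| := by
  rcases lt_trichotomy r 0 with h | rfl | h
  · rw [Real.sign_of_neg h, abs_of_neg h, mul_neg_one]
  · simp
  · rw [Real.sign_of_pos h, abs_of_pos h, mul_one]

theorem Real.abs_sign_le_one (r : ℝ) : |Real.sign r| ≤ 1 := by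
  rcases Real.sign_apply_eq r with h | h | h <;> simp [h]

theorem sum_abs_pi_single {ι : Type*} [Fintype ι] [DecidableEq ι] (j : ι) (v : ℝ) :
    ∑ i, |(Pi.single j v : ι → ℝ) i| = |v| := by
  rw [Finset.sum_eq_single j (fun i _ hi => by simp [hi]) (by simp), Pi.single_eq_same]

theorem neg_mul_sum_abs_le_sum_mul {ι : Type*} [Fintype ι] {η : ι → ℝ} {c : ℝ}
    (hη : ∀ i, |η i| ≤ c) (x : ι → ℝ) : -(c * ∑ i, |x i|) ≤ ∑ i, η i * x i := by
  rw [Finset.mul_sum, ← Finset.sum_neg_distrib]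
  gcongr with i
  calc -(c * |x i|) ≤ -|η i * x i| := by
        rw [abs_mul, neg_le_neg_iff]
        exact mul_le_mul_of_nonneg_right (hη i) (abs_nonneg _)
    _ ≤ η i * x i := neg_abs_le _

theorem min_zero_mul_le_mul {a t M : ℝ} (ht₀ : 0 ≤ t) (htM : t ≤ M) :
    min 0 (M * a) ≤ a * t := by
  rcases le_total 0 a with ha | ha
  · exact (min_le_left _ _).trans (mul_nonneg ha ht₀)
  · exact (min_le_right _ _).trans (by nlinarith)

theorem min_zero_le_sum_mul_add_mul {ι : Type*} [Fintype ι] {η : ι → ℝ} {c : ℝ} (hc : 0 ≤ c)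
    (hη : ∀ i, |η i| ≤ c) (lam M t : ℝ) (x : ι → ℝ) (hx : ∑ i, |x i| ≤ t) (htM : t ≤ M) :
    min 0 (M * (lam - c)) ≤ ∑ i, η i * x i + lam * t := by
  have ht₀ : 0 ≤ t := (Finset.sum_nonneg fun i _ => abs_nonneg (x i)).trans hx
  calc min 0 (M * (lam - c)) ≤ (lam - c) * t := min_zero_mul_le_mul ht₀ htM
    _ = -(c * t) + lam * t := by ring
    _ ≤ -(c * ∑ i, |x i|) + lam * t := by gcongr
    _ ≤ ∑ i, η i * x i + lam * t := by gcongr; exact neg_mul_sum_abs_le_sum_mul hη x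

theorem linear_subproblem_over_cone_general (N : ℕ) (η : Fin N → ℝ) (lam M : ℝ)
    (hM : 0 < M)
    (i₀ : Fin N) (hi₀ : ∀ i, |η i| ≤ |η i₀|)
    (C : Set (ℝ × (Fin N → ℝ)))
    (hC : C = {p | (∑ i, |p.2 i|) ≤ p.1 ∧ p.1 ≤ M})
    (l : ℝ × (Fin N → ℝ) → ℝ)
    (hl : ∀ p, l p = (∑ i, η i * p.2 i) + lam * p.1) :
    IsLeast (l '' C) (min 0 (M * (lam - |η i₀|))) ∧
    (lam < |η i₀| →
      ((M, Pi.single i₀ (-(M * Real.sign (η i₀)))) ∈ C ∧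
       l (M, Pi.single i₀ (-(M * Real.sign (η i₀)))) = min 0 (M * (lam - |η i₀|)))) := by
  subst hC
  set v : Fin N → ℝ := Pi.single i₀ (-(M * Real.sign (η i₀)))
  have hv_mem : (M, v) ∈ {p : ℝ × (Fin N → ℝ) | (∑ i, |p.2 i|) ≤ p.1 ∧ p.1 ≤ M} := by
    refine ⟨?_, le_rfl⟩
    rw [sum_abs_pi_single, abs_neg, abs_mul, abs_of_pos hM]
    exact mul_le_of_le_one_right hM.le (Real.abs_sign_le_one _)
  have hv_val : l (M, v) = M * (lam - |η i₀|) := by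
    rw [hl, show ∑ i, η i * v i = η ⬝ᵥ v from rfl, dotProduct_single, ← Real.mul_sign_eq_abs]
    ring
  have h0_mem : ((0 : ℝ), (0 : Fin N → ℝ)) ∈ {p : ℝ × (Fin N → ℝ) | (∑ i, |p.2 i|) ≤ p.1 ∧ p.1 ≤ M} :=
    ⟨by simp, hM.le⟩
  have h0_val : l (0, 0) = 0 := by simp [hl]
  refine ⟨⟨?_, ?_⟩, fun h => ⟨hv_mem, hv_val.trans (min_eq_right (by nlinarith)).symm⟩⟩
  · rcases min_choice 0 (M * (lam - |η i₀|)) with h | h <;> rw [h]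
    exacts [⟨_, h0_mem, h0_val⟩, ⟨_, hv_mem, hv_val⟩]
  · rintro _ ⟨p, ⟨hp₁, hpM⟩, rfl⟩
    rw [hl]
    exact min_zero_le_sum_mul_add_mul (abs_nonneg _) hi₀ lam M p.1 p.2 hp₁ hpM

/-- The Frank-Wolfe linear minimization subproblem over C = {(t,x) : ‖x‖₁ ≤ t ≤ M}:
the minimum of ℓ(t,x) = ⟨η,x⟩ + λt equals min(0, M(λ - ‖η‖_∞)), attained, when ‖η‖_∞ > λ,
at (M, -M·sign(η_{i*})·e_{i*}) for i* maximizing |η_i|. -/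
theorem linear_subproblem_over_cone (N : ℕ) (η : Fin N → ℝ) (lam M : ℝ)
    (hlam : 0 < lam) (hM : 0 < M)
    (i₀ : Fin N) (hi₀ : ∀ i, |η i| ≤ |η i₀|)
    (C : Set (ℝ × (Fin N → ℝ)))
    (hC : C = {p | (∑ i, |p.2 i|) ≤ p.1 ∧ p.1 ≤ M})
    (l : ℝ × (Fin N → ℝ) → ℝ)
    (hl : ∀ p, l p = (∑ i, η i * p.2 i) + lam * p.1) :
    IsLeast (l '' C) (min 0 (M * (lam - |η i₀|))) ∧
    (lam < |η i₀| →
      ((M, Pi.single i₀ (-(M * Real.sign (η i₀)))) ∈ C ∧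
       l (M, Pi.single i₀ (-(M * Real.sign (η i₀)))) = min 0 (M * (lam - |η i₀|)))) :=
  linear_subproblem_over_cone_general N η lam M hM i₀ hi₀ C hC l hl
end

section
/- Let f : D → R be convex and differentiable on a convex compact set D ⊆ R^n with curvature constant C_f, meaning f((1-γ)x + γs) ≤ f(x) + γ⟨∇f(x), s - x⟩ + (γ²/2)C_f for all x, s ∈ D and γ ∈ [0,1]. Suppose a sequence x_k ∈ D satisfies, for γ_k = 2/(k+2) and δ ≥ 0: there exists s_k ∈ D with ⟨∇f(x_k), s_k⟩ ≤ min_{s∈D}⟨∇f(x_k), s⟩ + (δ/2)γ_k C_f and f(x_{k+1}) ≤ f((1-γ_k)x_k + γ_k s_k). Then f(x_k) - min_D f ≤ (2 C_f / (k+2))(1 + δ) for all k ≥ 1. -/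
open scoped BigOperators RealInnerProductSpace

open Filter Set Topology

/-- Gradient inequality for a convex differentiable function. -/
lemma grad_convex_ineq {n : ℕ} {D : Set (EuclideanSpace ℝ (Fin n))}
    {f : EuclideanSpace ℝ (Fin n) → ℝ} (hfconv : ConvexOn ℝ D f)
    (hfdiff : Differentiable ℝ f) {a z : EuclideanSpace ℝ (Fin n)}
    (ha : a ∈ D) (hz : z ∈ D) :
    f a + ⟪gradient f a, z - a⟫ ≤ f z := by
  set g : ℝ → ℝ := fun t => f (a + t • (z - a)) with hg
  have hc : HasDerivAt (fun t : ℝ => a + t • (z - a)) (z - a) 0 := by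
    simpa using ((hasDerivAt_id (0:ℝ)).smul_const (z - a)).const_add a
  have hF : HasFDerivAt f (InnerProductSpace.toDual ℝ _ (gradient f a)) a :=
    (hasGradientAt_iff_hasFDerivAt.1 (hfdiff a).hasGradientAt)
  have hF' : HasFDerivAt f (InnerProductSpace.toDual ℝ _ (gradient f a))
      (a + (0:ℝ) • (z - a)) := by simpa using hF
  have hd : HasDerivAt g ⟪gradient f a, z - a⟫ 0 := by
    exact
      hF'.comp_hasDerivAt 0 hc
  have htend : Tendsto (slope g 0) (𝓝[>] (0:ℝ)) (𝓝 ⟪gradient f a, z - a⟫) :=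
    (hasDerivAt_iff_tendsto_slope.1 hd).mono_left
      (nhdsWithin_mono _ (fun t ht => ne_of_gt ht))
  have hev : ∀ᶠ t in 𝓝[>] (0:ℝ), slope g 0 t ≤ f z - f a := by
    filter_upwards [Ioc_mem_nhdsGT_of_mem (by norm_num : (0:ℝ) ∈ Ico (0:ℝ) 1)]
      with t ht
    have ht0 : 0 < t := ht.1
    have ht1 : t ≤ 1 := ht.2
    have hconv : g t ≤ (1 - t) * f a + t * f z := by
      have := hfconv.2 ha hz (by linarith : (0:ℝ) ≤ 1 - t) ht0.le (by ring)
      have heq : (1 - t) • a + t • z = a + t • (z - a) := by module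
      simpa [hg, heq] using this
    have : slope g 0 t = (g t - f a) / t := by
      simp [slope, hg, inv_mul_eq_div]
    rw [this, div_le_iff₀ ht0]
    nlinarith
  have hle : ⟪gradient f a, z - a⟫ ≤ f z - f a :=
    le_of_tendsto htend hev
  linarith

/-- Frank-Wolfe convergence rate (Jaggi 2013, Theorem 1) in the form needed for Polyatomic FW:
with step sizes γ_k = 2/(k+2), approximate linear subproblem solutions of quality (δ/2)γ_k C_f
and monotone improvement over the convex-combination step, the primal gap satisfies
f(x_k) - min_D f ≤ (2C_f/(k+2))(1+δ) for all k ≥ 1. -/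
theorem polyatomic_fw_convergence (n : ℕ)
    (D : Set (EuclideanSpace ℝ (Fin n))) (hDconv : Convex ℝ D) (hDcomp : IsCompact D)
    (f : EuclideanSpace ℝ (Fin n) → ℝ) (hfconv : ConvexOn ℝ D f)
    (hfdiff : Differentiable ℝ f)
    (Cf : ℝ) (hCf : 0 ≤ Cf)
    (hcurv : ∀ x ∈ D, ∀ s ∈ D, ∀ γ ∈ Set.Icc (0 : ℝ) 1,
      f ((1 - γ) • x + γ • s) ≤ f x + γ * ⟪gradient f x, s - x⟫ + γ ^ 2 / 2 * Cf)
    (δ : ℝ) (hδ : 0 ≤ δ)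
    (x : ℕ → EuclideanSpace ℝ (Fin n)) (hx : ∀ k, x k ∈ D)
    (hstep : ∀ k : ℕ, ∃ s ∈ D,
      (∀ s' ∈ D, ⟪gradient f (x k), s⟫ ≤ ⟪gradient f (x k), s'⟫ + δ / 2 * (2 / ((k : ℝ) + 2)) * Cf) ∧
      f (x (k + 1)) ≤ f ((1 - 2 / ((k : ℝ) + 2)) • x k + (2 / ((k : ℝ) + 2)) • s)) :
    ∀ k : ℕ, 1 ≤ k → ∀ z ∈ D, f (x k) - f z ≤ 2 * Cf / ((k : ℝ) + 2) * (1 + δ) := by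
  -- one-step recurrence
  have key : ∀ k : ℕ, ∀ z ∈ D,
      f (x (k + 1)) - f z ≤ (1 - 2 / ((k : ℝ) + 2)) * (f (x k) - f z)
        + (2 / ((k : ℝ) + 2)) ^ 2 / 2 * Cf * (1 + δ) := by
    intro k z hz
    obtain ⟨s, hsD, hlin, himp⟩ := hstep k
    set γ : ℝ := 2 / ((k : ℝ) + 2) with hγdef
    have hk2 : (0:ℝ) < (k : ℝ) + 2 := by positivity
    have hγ0 : 0 < γ := by positivity
    have hγ1 : γ ≤ 1 := by
      rw [hγdef, div_le_one hk2]
      have : (0:ℝ) ≤ (k : ℝ) := Nat.cast_nonneg k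
      linarith
    have hcurv' := hcurv (x k) (hx k) s hsD γ ⟨hγ0.le, hγ1⟩
    have hle1 : f (x (k + 1)) ≤ f (x k) + γ * ⟪gradient f (x k), s - x k⟫ + γ ^ 2 / 2 * Cf :=
      le_trans himp hcurv'
    have hlin' : ⟪gradient f (x k), s⟫ ≤ ⟪gradient f (x k), z⟫ + δ / 2 * γ * Cf := hlin z hz
    have hgrad : f (x k) + ⟪gradient f (x k), z - x k⟫ ≤ f z :=
      grad_convex_ineq hfconv hfdiff (hx k) hz
    have hsub : ⟪gradient f (x k), s - x k⟫ =
        ⟪gradient f (x k), s⟫ - ⟪gradient f (x k), x k⟫ := inner_sub_right _ _ _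
    have hsub2 : ⟪gradient f (x k), z - x k⟫ =
        ⟪gradient f (x k), z⟫ - ⟪gradient f (x k), x k⟫ := inner_sub_right _ _ _
    -- combine
    have h1 : ⟪gradient f (x k), s - x k⟫ ≤ (f z - f (x k)) + δ / 2 * γ * Cf := by
      rw [hsub]; rw [hsub2] at hgrad; linarith
    have h2 : γ * ⟪gradient f (x k), s - x k⟫ ≤ γ * ((f z - f (x k)) + δ / 2 * γ * Cf) :=
      mul_le_mul_of_nonneg_left h1 hγ0.le
    nlinarith [h2, hle1]
  intro k hk
  induction k, hk using Nat.le_induction with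
  | base =>
      intro z hz
      have h := key 0 z hz
      norm_num at h ⊢
      nlinarith
  | succ k hk ih =>
      intro z hz
      have h := key k z hz
      have ihz := ih z hz
      have hk2 : (0:ℝ) < (k : ℝ) + 2 := by positivity
      have hk3 : (3:ℝ) ≤ (k : ℝ) + 2 := by
        have : (1:ℝ) ≤ (k : ℝ) := by exact_mod_cast hk
        linarith
      have hγ1 : (0:ℝ) ≤ 1 - 2 / ((k : ℝ) + 2) := by
        rw [sub_nonneg, div_le_one hk2]; linarith
      have hmul : (1 - 2 / ((k : ℝ) + 2)) * (f (x k) - f z)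
          ≤ (1 - 2 / ((k : ℝ) + 2)) * (2 * Cf / ((k : ℝ) + 2) * (1 + δ)) :=
        mul_le_mul_of_nonneg_left ihz hγ1
      have hcast : ((k + 1 : ℕ) : ℝ) + 2 = (k : ℝ) + 3 := by push_cast; ring
      rw [hcast]
      have harith : (1 - 2 / ((k : ℝ) + 2)) * (2 * Cf / ((k : ℝ) + 2) * (1 + δ))
          + (2 / ((k : ℝ) + 2)) ^ 2 / 2 * Cf * (1 + δ) ≤ 2 * Cf / ((k : ℝ) + 3) * (1 + δ) := by
        have hCδ : 0 ≤ Cf * (1 + δ) := by positivity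
        have hk3' : (0:ℝ) < (k : ℝ) + 3 := by positivity
        have heq1 : (1 - 2 / ((k : ℝ) + 2)) * (2 * Cf / ((k : ℝ) + 2) * (1 + δ))
            + (2 / ((k : ℝ) + 2)) ^ 2 / 2 * Cf * (1 + δ)
            = (2 * (((k:ℝ)+2) - 1) / ((k:ℝ)+2) ^ 2) * (Cf * (1 + δ)) := by
          field_simp
          ring
        have heq2 : 2 * Cf / ((k : ℝ) + 3) * (1 + δ) = (2 / ((k:ℝ)+3)) * (Cf * (1 + δ)) := by
          ring
        rw [heq1, heq2]
        apply mul_le_mul_of_nonneg_right _ hCδ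
        rw [div_le_div_iff₀ (by positivity) (by positivity)]
        nlinarith
      linarith
end
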